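/- arXiv:1402.1619 — 6 statements merged into one kernel-verified Lean document; each statement's English description precedes it below -/
import Mathlib

section
/- Let S : ℝ → ℝ be 1-Lipschitz, let J be a real n×n matrix whose operator norm with respect to the Euclidean norm satisfies ‖J‖ = η < 1, let m ∈ ℝⁿ and let u : ℕ → ℝ be an input sequence. If x, x̃ : ℕ → ℝⁿ are two trajectories of the echo state dynamics xᵢ(t+1) = S((J x(t))ᵢ + mᵢ u(t)) (with the same input u but possibly different initial conditions), then for every t, ‖x(t) − x̃(t)‖ ≤ ηᵗ ‖x(0) − x̃(0)‖; in particular ‖x(t) − x̃(t)‖ → 0 as t → ∞. -/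
/-!
A step of the network is `v ↦ S ∘ (J v + u(t) m)`: the affine part is `‖J‖`-Lipschitz, and
applying a 1-Lipschitz `S` in every coordinate is 1-Lipschitz for the Euclidean norm. So two
trajectories driven by the same input get closer by a factor `η` at every step.
-/

open NNReal WithLp

section

variable {ι : Type*} [Fintype ι]

theorem EuclideanSpace.lipschitzWith_map {S : ℝ → ℝ} {K : ℝ≥0} (hS : LipschitzWith K S) :
    LipschitzWith K (fun v : EuclideanSpace ℝ ι => toLp 2 fun i => S (v i)) := by
  refine LipschitzWith.of_dist_le_mul fun v w => ?_
  rw [EuclideanSpace.dist_eq, EuclideanSpace.dist_eq, ← Real.sqrt_sq K.coe_nonneg,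
    ← Real.sqrt_mul (sq_nonneg _), Finset.mul_sum]
  gcongr with i
  rw [← mul_pow]
  exact pow_le_pow_left₀ dist_nonneg (hS.dist_le_mul (v i) (w i)) 2

noncomputable def echoStateMap (S : ℝ → ℝ) (J : Matrix ι ι ℝ)
    (m : EuclideanSpace ℝ ι) (a : ℝ) (v : EuclideanSpace ℝ ι) : EuclideanSpace ℝ ι :=
  toLp 2 fun i => S (J.mulVec v i + m i * a)

theorem lipschitzWith_echoStateMap [DecidableEq ι] {S : ℝ → ℝ} {K : ℝ≥0}
    (hS : LipschitzWith K S) (J : Matrix ι ι ℝ) (m : EuclideanSpace ℝ ι) (a : ℝ) :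
    LipschitzWith (K * ‖Matrix.toEuclideanCLM (𝕜 := ℝ) J‖₊) (echoStateMap S J m a) := by
  have hcomp : echoStateMap S J m a = (fun w : EuclideanSpace ℝ ι => toLp 2 fun i => S (w i)) ∘
      fun v => Matrix.toEuclideanCLM (𝕜 := ℝ) J v + a • m := by
    ext v i
    simp [echoStateMap, mul_comm]
  rw [hcomp]
  refine (EuclideanSpace.lipschitzWith_map hS).comp ?_
  simpa using (Matrix.toEuclideanCLM (𝕜 := ℝ) J).lipschitz.add (LipschitzWith.const (a • m))

end

theorem dist_le_pow_mul_of_lipschitzWith {α : Type*} [PseudoMetricSpace α] {K : ℝ≥0}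
    {f : ℕ → α → α} (hf : ∀ t, LipschitzWith K (f t)) {x x' : ℕ → α}
    (hx : ∀ t, x (t + 1) = f t (x t)) (hx' : ∀ t, x' (t + 1) = f t (x' t)) (t : ℕ) :
    dist (x t) (x' t) ≤ K ^ t * dist (x 0) (x' 0) := by
  refine le_geom (u := fun t => dist (x t) (x' t)) K.coe_nonneg t fun k _ => ?_
  rw [hx, hx']
  exact (hf k).dist_le_mul _ _

/-- If the Euclidean operator norm of the reservoir matrix `J` is `η < 1`
and `S` is 1-Lipschitz, then any two trajectories of the echo state dynamics
`xᵢ(t+1) = S((J x(t))ᵢ + mᵢ u(t))` with the same input contract at rate `η`,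
hence converge to each other. -/
theorem echo_state_property_of_opNorm_lt_one
    (n : ℕ) (S : ℝ → ℝ) (hS : LipschitzWith 1 S)
    (J : Matrix (Fin n) (Fin n) ℝ) (m : EuclideanSpace ℝ (Fin n)) (u : ℕ → ℝ)
    (η : ℝ) (hη : ‖Matrix.toEuclideanCLM (𝕜 := ℝ) J‖ = η) (hη1 : η < 1)
    (x x' : ℕ → EuclideanSpace ℝ (Fin n))
    (hx : ∀ t i, x (t + 1) i = S (J.mulVec (x t) i + m i * u t))
    (hx' : ∀ t i, x' (t + 1) i = S (J.mulVec (x' t) i + m i * u t)) :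
    (∀ t, ‖x t - x' t‖ ≤ η ^ t * ‖x 0 - x' 0‖) ∧
      Filter.Tendsto (fun t => ‖x t - x' t‖) Filter.atTop (nhds 0) := by
  have hη0 : 0 ≤ η := hη ▸ norm_nonneg _
  have hlip :
      ∀ t, LipschitzWith ‖Matrix.toEuclideanCLM (𝕜 := ℝ) J‖₊ (echoStateMap S J m (u t)) :=
    fun t => by simpa using lipschitzWith_echoStateMap hS J m (u t)
  have hbound : ∀ t, ‖x t - x' t‖ ≤ η ^ t * ‖x 0 - x' 0‖ := by
    intro t
    simp only [← dist_eq_norm, ← hη]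
    exact dist_le_pow_mul_of_lipschitzWith hlip (fun t => by ext i; exact hx t i)
      (fun t => by ext i; exact hx' t i) t
  refine ⟨hbound, squeeze_zero (fun _ => norm_nonneg _) hbound ?_⟩
  simpa using (tendsto_pow_atTop_nhds_zero_of_lt_one hη0 hη1).mul_const ‖x 0 - x' 0‖
end

section
/- Let S : ℝ → ℝ be 1-Lipschitz, let J be a real n×n matrix with Euclidean operator norm η, let m ∈ ℝⁿ, u : ℕ → ℝ, and let l, τ ∈ [0,1]. If κ := |1 − lτ| + τη < 1, then any two trajectories x, x̃ : ℕ → ℝⁿ of the leaky echo state dynamics xᵢ(t+1) = (1 − lτ) xᵢ(t) + τ S((J x(t))ᵢ + mᵢ u(t)) with the same input satisfy ‖x(t) − x̃(t)‖ ≤ κᵗ ‖x(0) − x̃(0)‖ for all t, hence ‖x(t) − x̃(t)‖ → 0 as t → ∞. -/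
/-!
One step of the dynamics is the map `x ↦ (1 - lτ) x + τ S(J x + m u(t))`. Applying a
`1`-Lipschitz `S` coordinatewise is `1`-Lipschitz for the Euclidean norm, so every step is
Lipschitz with constant `|1 - lτ| + τ‖J‖ = κ`, whatever the input; the distance between two
trajectories therefore shrinks geometrically.
-/

open WithLp

theorem LipschitzWith.euclideanSpace_map {ι : Type*} [Fintype ι] {K : NNReal} {S : ℝ → ℝ}
    (hS : LipschitzWith K S) :
    LipschitzWith K fun v : EuclideanSpace ℝ ι => toLp 2 fun i => S (v i) := by
  refine LipschitzWith.of_dist_le_mul fun v w => ?_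
  rw [EuclideanSpace.dist_eq, EuclideanSpace.dist_eq, ← Real.sqrt_sq K.coe_nonneg,
    ← Real.sqrt_mul (sq_nonneg _), Finset.mul_sum]
  gcongr with i
  rw [← mul_pow]
  exact pow_le_pow_left₀ dist_nonneg (hS.dist_le_mul _ _) 2

section LeakyStep

variable {ι : Type*} [Fintype ι]

def leakyStep (S : ℝ → ℝ) (J : Matrix ι ι ℝ) (m : EuclideanSpace ℝ ι) (l τ v : ℝ)
    (x : EuclideanSpace ℝ ι) : EuclideanSpace ℝ ι :=
  (1 - l * τ) • x + τ • toLp 2 fun i => S (J.mulVec x i + m i * v)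

theorem lipschitzWith_leakyStep [DecidableEq ι] {K : NNReal} {S : ℝ → ℝ}
    (hS : LipschitzWith K S) (J : Matrix ι ι ℝ) (m : EuclideanSpace ℝ ι) (l τ v : ℝ) :
    LipschitzWith (‖1 - l * τ‖₊ + ‖τ‖₊ * (K * ‖Matrix.toEuclideanCLM (𝕜 := ℝ) J‖₊))
      (leakyStep S J m l τ v) := by
  have hpreactivation : LipschitzWith ‖Matrix.toEuclideanCLM (𝕜 := ℝ) J‖₊
      fun x : EuclideanSpace ℝ ι => Matrix.toEuclideanCLM (𝕜 := ℝ) J x + toLp 2 fun i => m i * v :=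
    by simpa using (Matrix.toEuclideanCLM (𝕜 := ℝ) J).lipschitz.add (LipschitzWith.const _)
  have hactivation := (lipschitzWith_smul τ).comp (hS.euclideanSpace_map.comp hpreactivation)
  exact (lipschitzWith_smul (1 - l * τ)).add hactivation

end LeakyStep

theorem leaky_echo_state_contraction_general
    (n : ℕ) (S : ℝ → ℝ) (hS : LipschitzWith 1 S)
    (J : Matrix (Fin n) (Fin n) ℝ) (m : EuclideanSpace ℝ (Fin n)) (u : ℕ → ℝ)
    (l τ : ℝ) (hτ : τ ∈ Set.Icc (0 : ℝ) 1)
    (η κ : ℝ) (hη : ‖Matrix.toEuclideanCLM (𝕜 := ℝ) J‖ = η)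
    (hκ : κ = |1 - l * τ| + τ * η) (hκ1 : κ < 1)
    (x x' : ℕ → EuclideanSpace ℝ (Fin n))
    (hx : ∀ t i, x (t + 1) i = (1 - l * τ) * x t i + τ * S (J.mulVec (x t) i + m i * u t))
    (hx' : ∀ t i, x' (t + 1) i = (1 - l * τ) * x' t i + τ * S (J.mulVec (x' t) i + m i * u t)) :
    (∀ t, ‖x t - x' t‖ ≤ κ ^ t * ‖x 0 - x' 0‖) ∧
      Filter.Tendsto (fun t => ‖x t - x' t‖) Filter.atTop (nhds 0) := by
  obtain ⟨hτ0, -⟩ := hτ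
  have hκ0 : 0 ≤ κ := by rw [hκ, ← hη]; positivity
  have step : ∀ y : ℕ → EuclideanSpace ℝ (Fin n),
      (∀ t i, y (t + 1) i = (1 - l * τ) * y t i + τ * S (J.mulVec (y t) i + m i * u t)) →
      ∀ t, y (t + 1) = leakyStep S J m l τ (u t) (y t) := fun y hy t => by
    ext i
    simp [leakyStep, hy]
  have contract : ∀ t, ‖x (t + 1) - x' (t + 1)‖ ≤ κ * ‖x t - x' t‖ := fun t => by
    have := (lipschitzWith_leakyStep hS J m l τ (u t)).dist_le_mul (x t) (x' t)
    rw [← step x hx, ← step x' hx', dist_eq_norm, dist_eq_norm] at this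
    simpa [hκ, ← hη, Real.norm_of_nonneg hτ0, ← Real.norm_eq_abs] using this
  have bound : ∀ t, ‖x t - x' t‖ ≤ κ ^ t * ‖x 0 - x' 0‖ := fun t =>
    le_geom (u := fun t => ‖x t - x' t‖) hκ0 t fun k _ => contract k
  refine ⟨bound, squeeze_zero (fun _ => norm_nonneg _) bound ?_⟩
  simpa using (tendsto_pow_atTop_nhds_zero_of_lt_one hκ0 hκ1).mul_const ‖x 0 - x' 0‖

/-- For the leaky echo state dynamics
`xᵢ(t+1) = (1 − lτ) xᵢ(t) + τ S((J x(t))ᵢ + mᵢ u(t))`, if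
`κ = |1 − lτ| + τ‖J‖ < 1` then trajectories with the same input contract at rate `κ`. -/
theorem leaky_echo_state_contraction
    (n : ℕ) (S : ℝ → ℝ) (hS : LipschitzWith 1 S)
    (J : Matrix (Fin n) (Fin n) ℝ) (m : EuclideanSpace ℝ (Fin n)) (u : ℕ → ℝ)
    (l τ : ℝ) (hl : l ∈ Set.Icc (0 : ℝ) 1) (hτ : τ ∈ Set.Icc (0 : ℝ) 1)
    (η κ : ℝ) (hη : ‖Matrix.toEuclideanCLM (𝕜 := ℝ) J‖ = η)
    (hκ : κ = |1 - l * τ| + τ * η) (hκ1 : κ < 1)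
    (x x' : ℕ → EuclideanSpace ℝ (Fin n))
    (hx : ∀ t i, x (t + 1) i = (1 - l * τ) * x t i + τ * S (J.mulVec (x t) i + m i * u t))
    (hx' : ∀ t i, x' (t + 1) i = (1 - l * τ) * x' t i + τ * S (J.mulVec (x' t) i + m i * u t)) :
    (∀ t, ‖x t - x' t‖ ≤ κ ^ t * ‖x 0 - x' 0‖) ∧
      Filter.Tendsto (fun t => ‖x t - x' t‖) Filter.atTop (nhds 0) :=
  leaky_echo_state_contraction_general n S hS J m u l τ hτ η κ hη hκ hκ1 x x' hx hx'
end

section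
/- Let S : ℝ → ℝ be defined by S(y) = ∫₀^y exp(−π t²/4) dt. Then for every z ∈ ℝ, (2π)^{−1/2} ∫_ℝ S(z x)² exp(−x²/2) dx = (2/π) · arcsin( π z² / (2 + π z²) ). -/
/-!
Substituting `t = v x` gives `S(zx) = x ∫₀^z exp(-π v² x² / 4) dv`, so for `z ≥ 0` the integrand
`S(zx)² exp(-x²/2)` is an integral over the square `[0, z]²` of `x² exp(-r x² / 2)` with
`r = 1 + (π/2)(u² + v²)`. After exchanging the integrals, the Gaussian integral in `x` is
`r^(-3/2)`, which has elementary antiderivatives in `v` and then in `u`; the result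
`(2/π) arctan(πz² / (2√(1 + πz²)))` equals `(2/π) arcsin(πz² / (2 + πz²))`.
Since `S` is odd, the case `z < 0` follows from `-z`.
-/

open Real Set MeasureTheory

theorem integral_sq_mul_exp_neg_mul_sq {b : ℝ} (hb : 0 < b) :
    ∫ x : ℝ, x ^ 2 * exp (-b * x ^ 2) = √π / (2 * b * √b) := by
  have hΓ : Gamma ((2 + 1) / 2) = √π / 2 := by
    rw [show ((2 : ℝ) + 1) / 2 = 1 / 2 + 1 by norm_num, Gamma_add_one (by norm_num),
      Gamma_one_half_eq]
    ring
  have hb' : b ^ (-((2 : ℝ) + 1) / 2) = (b * √b)⁻¹ := by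
    rw [show -((2 : ℝ) + 1) / 2 = -(1 + 1 / 2) by norm_num, rpow_neg hb.le, rpow_add hb,
      rpow_one, ← sqrt_eq_rpow]
  have h_abs := integral_comp_abs (f := fun x => x ^ (2 : ℝ) * exp (-b * x ^ (2 : ℝ)))
  have h_Ioi := integral_rpow_mul_exp_neg_mul_rpow two_pos (by norm_num : (-1 : ℝ) < 2) hb
  simp only [rpow_two, sq_abs] at h_abs h_Ioi
  rw [h_abs, h_Ioi, hΓ, hb']
  field_simp

theorem inv_sqrt_two_pi_mul_integral_sq_mul_exp_neg_half_mul_sq {r : ℝ} (hr : 0 < r) :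
    (√(2 * π))⁻¹ * ∫ x : ℝ, x ^ 2 * exp (-(r / 2) * x ^ 2) = (r * √r)⁻¹ := by
  rw [integral_sq_mul_exp_neg_mul_sq (by positivity), sqrt_div' _ zero_le_two,
    sqrt_mul zero_le_two]
  have : 0 < √r := sqrt_pos.2 hr
  have : 0 < √π := sqrt_pos.2 pi_pos
  have : √(2 : ℝ) ^ 2 = 2 := sq_sqrt zero_le_two
  field_simp

theorem integrable_sq_mul_exp_neg_mul_sq {b : ℝ} (hb : 0 < b) :
    Integrable fun x : ℝ => x ^ 2 * exp (-b * x ^ 2) := by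
  simpa [rpow_two] using integrable_rpow_mul_exp_neg_mul_sq hb (by norm_num : (-1 : ℝ) < 2)

theorem integrable_sq_mul_exp_neg_mul_sq_prod {α : Type*} [MeasurableSpace α] {ν : Measure α}
    [IsFiniteMeasure ν] {a : α → ℝ} (ha : Measurable a) {b : ℝ} (hb : 0 < b)
    (hba : ∀ p, b ≤ a p) :
    Integrable (fun q : ℝ × α => q.1 ^ 2 * exp (-a q.2 * q.1 ^ 2)) (volume.prod ν) := by
  refine ((integrable_sq_mul_exp_neg_mul_sq hb).comp_fst ν).mono'
    (by fun_prop : Measurable _).aestronglyMeasurable (ae_of_all _ fun q => ?_)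
  have hexp : exp (-a q.2 * q.1 ^ 2) ≤ exp (-b * q.1 ^ 2) :=
    exp_le_exp.2 (by nlinarith [hba q.2, sq_nonneg q.1])
  rw [norm_of_nonneg (by positivity)]
  exact mul_le_mul_of_nonneg_left hexp (sq_nonneg _)

theorem integral_inv_mul_sqrt_add_mul_sq {b c : ℝ} (hb : 0 < b) (hc : 0 ≤ c) (w : ℝ) :
    ∫ v in (0 : ℝ)..w, ((b + c * v ^ 2) * √(b + c * v ^ 2))⁻¹ = w / (b * √(b + c * w ^ 2)) := by
  have hq : ∀ v : ℝ, 0 < b + c * v ^ 2 := fun v => by positivity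
  have hderiv : ∀ v : ℝ, HasDerivAt (fun v => v / (b * √(b + c * v ^ 2)))
      ((b + c * v ^ 2) * √(b + c * v ^ 2))⁻¹ v := by
    intro v
    have hs := (((hasDerivAt_pow 2 v).const_mul c).const_add b).sqrt (hq v).ne'
    have hs_pos := sqrt_pos.2 (hq v)
    refine ((hasDerivAt_id' v).div (hs.const_mul b) (by positivity)).congr_deriv ?_
    have hsq := sq_sqrt (hq v).le
    field_simp
    linear_combination 2 * c * v ^ 2 * hsq
  have hcont : Continuous fun v : ℝ => ((b + c * v ^ 2) * √(b + c * v ^ 2))⁻¹ := by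
    fun_prop (disch := intro v; have := hq v; positivity)
  rw [intervalIntegral.integral_eq_sub_of_hasDerivAt (fun v _ => hderiv v)
    (hcont.intervalIntegrable 0 w)]
  simp

theorem integral_div_mul_sqrt_add_mul_sq {c : ℝ} (hc : 0 < c) (w : ℝ) :
    ∫ u in (0 : ℝ)..w, w / ((1 + c * u ^ 2) * √(1 + c * u ^ 2 + c * w ^ 2)) =
      c⁻¹ * arctan (c * w ^ 2 / √(1 + 2 * (c * w ^ 2))) := by
  have hq : ∀ u : ℝ, 0 < 1 + c * u ^ 2 + c * w ^ 2 := fun u => by positivity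
  have hderiv : ∀ u : ℝ,
      HasDerivAt (fun u => c⁻¹ * arctan (c * w * u / √(1 + c * u ^ 2 + c * w ^ 2)))
        (w / ((1 + c * u ^ 2) * √(1 + c * u ^ 2 + c * w ^ 2))) u := by
    intro u
    have hs := ((((hasDerivAt_pow 2 u).const_mul c).const_add 1).add_const (c * w ^ 2)).sqrt
      (hq u).ne'
    have hs_pos := sqrt_pos.2 (hq u)
    refine ((((hasDerivAt_id' u).const_mul (c * w)).div hs hs_pos.ne').arctan.const_mul
      c⁻¹).congr_deriv ?_
    have hsq := sq_sqrt (hq u).le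
    have h1 : 0 < 1 + c * u ^ 2 := by positivity
    simp only [Pi.div_apply]
    field_simp
    linear_combination 2 * c * w * u ^ 2 * hsq
  have hcont : Continuous fun u : ℝ => w / ((1 + c * u ^ 2) * √(1 + c * u ^ 2 + c * w ^ 2)) := by
    fun_prop (disch := intro u; have := hq u; positivity)
  rw [intervalIntegral.integral_eq_sub_of_hasDerivAt (fun u _ => hderiv u)
    (hcont.intervalIntegrable 0 w)]
  simp only [mul_zero, zero_div, arctan_zero, sub_zero]
  ring_nf

theorem arctan_div_sqrt_one_add_two_mul {s : ℝ} (hs : -(1 / 2) < s) :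
    arctan (s / √(1 + 2 * s)) = arcsin (s / (1 + s)) := by
  have h2s : 0 < 1 + 2 * s := by linarith
  have h1s : 0 < 1 + s := by linarith
  have hr := sqrt_pos.2 h2s
  have hnorm : √(1 + (s / √(1 + 2 * s)) ^ 2) = (1 + s) / √(1 + 2 * s) := by
    rw [sqrt_eq_iff_eq_sq (by positivity) (by positivity), div_pow, div_pow, sq_sqrt h2s.le,
      one_add_div h2s.ne']
    ring
  rw [arctan_eq_arcsin, hnorm, div_div_div_cancel_right₀ hr.ne']

theorem integral_integral_inv_mul_sqrt_one_add_mul_sq_add_sq {c : ℝ} (hc : 0 < c) (w : ℝ) :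
    ∫ u in (0 : ℝ)..w, ∫ v in (0 : ℝ)..w,
        ((1 + c * (u ^ 2 + v ^ 2)) * √(1 + c * (u ^ 2 + v ^ 2)))⁻¹ =
      c⁻¹ * arcsin (c * w ^ 2 / (1 + c * w ^ 2)) := by
  have hinner : ∀ u : ℝ, ∫ v in (0 : ℝ)..w,
      ((1 + c * (u ^ 2 + v ^ 2)) * √(1 + c * (u ^ 2 + v ^ 2)))⁻¹ =
        w / ((1 + c * u ^ 2) * √(1 + c * u ^ 2 + c * w ^ 2)) := fun u => by
    simp_rw [mul_add, ← add_assoc]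
    exact integral_inv_mul_sqrt_add_mul_sq (by positivity) hc.le w
  simp_rw [hinner, integral_div_mul_sqrt_add_mul_sq hc,
    arctan_div_sqrt_one_add_two_mul (by nlinarith [sq_nonneg w] : -(1 / 2) < c * w ^ 2)]

noncomputable def erfSigmoid (y : ℝ) : ℝ := ∫ t in (0 : ℝ)..y, exp (-(π * t ^ 2) / 4)

theorem erfSigmoid_neg (y : ℝ) : erfSigmoid (-y) = -erfSigmoid y := by
  have h := intervalIntegral.integral_comp_neg (a := 0) (b := -y)
    (fun t => exp (-(π * t ^ 2) / 4))
  simp only [neg_sq, neg_zero, neg_neg] at h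
  rw [erfSigmoid, erfSigmoid, h, intervalIntegral.integral_symm]

theorem erfSigmoid_mul (z x : ℝ) :
    erfSigmoid (z * x) = x * ∫ v in (0 : ℝ)..z, exp (-(π * (v * x) ^ 2) / 4) := by
  have h := intervalIntegral.smul_integral_comp_mul_right
    (fun t => exp (-(π * t ^ 2) / 4)) x (a := 0) (b := z)
  rw [zero_mul, smul_eq_mul] at h
  rw [h, erfSigmoid]

theorem sq_erfSigmoid_mul_mul_exp_eq_integral {z : ℝ} (hz : 0 ≤ z) (x : ℝ) :
    erfSigmoid (z * x) ^ 2 * exp (-x ^ 2 / 2) =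
      ∫ p, x ^ 2 * exp (-((1 + π / 2 * (p.1 ^ 2 + p.2 ^ 2)) / 2) * x ^ 2)
        ∂(volume.restrict (Ioc 0 z)).prod (volume.restrict (Ioc 0 z)) := by
  rw [erfSigmoid_mul, intervalIntegral.integral_of_le hz, mul_pow, sq (∫ _ in _, _),
    ← integral_prod_mul, mul_right_comm, ← integral_const_mul]
  congr 1 with p
  rw [mul_assoc, ← exp_add, ← exp_add]
  ring_nf

theorem gaussian_second_moment_erfSigmoid_of_nonneg {z : ℝ} (hz : 0 ≤ z) :
    (√(2 * π))⁻¹ * ∫ x : ℝ, erfSigmoid (z * x) ^ 2 * exp (-x ^ 2 / 2) =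
      2 / π * arcsin (π * z ^ 2 / (2 + π * z ^ 2)) := by
  set ν := (volume.restrict (Ioc 0 z)).prod (volume.restrict (Ioc 0 z))
  set r : ℝ × ℝ → ℝ := fun p => 1 + π / 2 * (p.1 ^ 2 + p.2 ^ 2)
  have hr : ∀ p, 1 ≤ r p := fun p => le_add_of_nonneg_right (by positivity)
  have hr_int : Integrable (fun p => (r p * √(r p))⁻¹) ν := by
    refine .of_bound (by fun_prop : Measurable _).aestronglyMeasurable 1 (ae_of_all _ fun p => ?_)
    have hrr : 1 ≤ r p * √(r p) := one_le_mul_of_one_le_of_one_le (hr p) (one_le_sqrt.2 (hr p))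
    rw [norm_of_nonneg (by positivity)]
    exact inv_le_one_of_one_le₀ hrr
  calc (√(2 * π))⁻¹ * ∫ x : ℝ, erfSigmoid (z * x) ^ 2 * exp (-x ^ 2 / 2)
      = (√(2 * π))⁻¹ * ∫ x : ℝ, ∫ p, x ^ 2 * exp (-(r p / 2) * x ^ 2) ∂ν := by
        simp_rw [sq_erfSigmoid_mul_mul_exp_eq_integral hz]
        rfl
    _ = ∫ p, (√(2 * π))⁻¹ * (∫ x : ℝ, x ^ 2 * exp (-(r p / 2) * x ^ 2)) ∂ν := by
        rw [integral_integral_swap, integral_const_mul]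
        exact integrable_sq_mul_exp_neg_mul_sq_prod (a := fun p => r p / 2) (by fun_prop)
          one_half_pos fun p => by linarith [hr p]
    _ = ∫ p, (r p * √(r p))⁻¹ ∂ν := by
        simp_rw [inv_sqrt_two_pi_mul_integral_sq_mul_exp_neg_half_mul_sq
          (one_pos.trans_le (hr _))]
    _ = (π / 2)⁻¹ * arcsin (π / 2 * z ^ 2 / (1 + π / 2 * z ^ 2)) := by
        rw [integral_prod _ hr_int, ← integral_integral_inv_mul_sqrt_one_add_mul_sq_add_sq
          (by positivity), intervalIntegral.integral_of_le hz]
        simp_rw [intervalIntegral.integral_of_le hz]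
        rfl
    _ = 2 / π * arcsin (π * z ^ 2 / (2 + π * z ^ 2)) := by
        rw [inv_div]
        congr 2
        field_simp

/-- Gaussian second moment of the error-function sigmoid
`S(y) = ∫₀^y exp(−πt²/4) dt`:
`(2π)^{−1/2} ∫ S(zx)² e^{−x²/2} dx = (2/π) arcsin(πz²/(2+πz²))`. -/
theorem gaussian_second_moment_erf_sigmoid (z : ℝ) :
    (Real.sqrt (2 * π))⁻¹ *
        ∫ x : ℝ, (∫ t in (0:ℝ)..(z * x), Real.exp (-(π * t ^ 2) / 4)) ^ 2 *
          Real.exp (-x ^ 2 / 2) =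
      2 / π * Real.arcsin (π * z ^ 2 / (2 + π * z ^ 2)) := by
  show (√(2 * π))⁻¹ * ∫ x : ℝ, erfSigmoid (z * x) ^ 2 * exp (-x ^ 2 / 2) = _
  rcases le_total 0 z with hz | hz
  · exact gaussian_second_moment_erfSigmoid_of_nonneg hz
  · simpa only [neg_mul, erfSigmoid_neg, neg_sq] using
      gaussian_second_moment_erfSigmoid_of_nonneg (neg_nonneg.2 hz)
end

section
/- The function F : [0,∞) → ℝ defined by F(y) = (2/π) · arcsin( π y / (2 + π y) ) is strictly increasing and concave on [0,∞). -/
/-!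
With `x = πy/(2+πy)` one has `1 - x² = 4(1+πy)/(2+πy)²`, so the chain rule gives
`F'(y) = 2 / ((2+πy) √(1+πy))`. This is positive, and strictly decreasing because its
denominator is a product of two increasing positive factors; hence `F` is strictly increasing
and (strictly) concave.
-/

open Real Set

section
variable {c y : ℝ}

lemma sqrt_one_sub_sq_mul_div_two_add (h : 0 < 1 + c * y) :
    √(1 - (c * y / (2 + c * y)) ^ 2) = 2 * √(1 + c * y) / (2 + c * y) := by
  have hd : 0 < 2 + c * y := by linarith
  have hsq : 1 - (c * y / (2 + c * y)) ^ 2 = (2 * √(1 + c * y) / (2 + c * y)) ^ 2 := by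
    have hrhs : (2 * √(1 + c * y) / (2 + c * y)) ^ 2 = 4 * (1 + c * y) / (2 + c * y) ^ 2 := by
      rw [div_pow, mul_pow, sq_sqrt h.le]
      norm_num
    rw [hrhs]
    field_simp
    ring
  rw [hsq, sqrt_sq (by positivity)]

lemma hasDerivAt_arcsin_mul_div_two_add (h : 0 < 1 + c * y) :
    HasDerivAt (fun y => arcsin (c * y / (2 + c * y)))
      (c / ((2 + c * y) * √(1 + c * y))) y := by
  have hd : 0 < 2 + c * y := by linarith
  have hinner : HasDerivAt (fun y => c * y / (2 + c * y)) (2 * c / (2 + c * y) ^ 2) y := by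
    have hlin : HasDerivAt (fun y => c * y) c y := by
      simpa using (hasDerivAt_id y).const_mul c
    refine (hlin.div (hlin.const_add 2) hd.ne').congr_deriv ?_
    ring
  have hsqrt := sqrt_one_sub_sq_mul_div_two_add h
  have hx : 0 < 1 - (c * y / (2 + c * y)) ^ 2 := by
    rw [← sqrt_pos, hsqrt]
    positivity
  have harcsin := hasDerivAt_arcsin (x := c * y / (2 + c * y))
    (by nlinarith) (by nlinarith)
  refine (harcsin.comp y hinner).congr_deriv ?_
  rw [hsqrt]
  field_simp

end

lemma strictAntiOn_div_two_add_mul_mul_sqrt {a c : ℝ} (ha : 0 < a) (hc : 0 < c) :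
    StrictAntiOn (fun y => a / ((2 + c * y) * √(1 + c * y))) (Ici 0) := by
  intro x (hx : 0 ≤ x) y (hy : 0 ≤ y) hxy
  have hcxy : c * x < c * y := mul_lt_mul_of_pos_left hxy hc
  have hsqrt : √(1 + c * x) < √(1 + c * y) := sqrt_lt_sqrt (by positivity) (by linarith)
  have hden : (2 + c * x) * √(1 + c * x) < (2 + c * y) * √(1 + c * y) :=
    mul_lt_mul'' (by linarith) hsqrt (by positivity) (by positivity)
  exact div_lt_div_of_pos_left ha (by positivity) hden

/-- the mean-field second-moment function
`F(y) = (2/π) arcsin(πy/(2+πy))` is strictly increasing and concave on `[0,∞)`. -/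
theorem meanfield_F_strictMono_and_concave :
    StrictMonoOn (fun y : ℝ => 2 / π * Real.arcsin (π * y / (2 + π * y))) (Set.Ici 0) ∧
      ConcaveOn ℝ (Set.Ici 0) (fun y : ℝ => 2 / π * Real.arcsin (π * y / (2 + π * y))) := by
  set F := fun y : ℝ => 2 / π * arcsin (π * y / (2 + π * y))
  set F' := fun y : ℝ => 2 / ((2 + π * y) * √(1 + π * y))
  have hF : ∀ y ∈ Ici (0 : ℝ), HasDerivAt F (F' y) y := fun y (hy : 0 ≤ y) => by
    refine ((hasDerivAt_arcsin_mul_div_two_add (c := π) (by positivity)).const_mul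
      (2 / π)).congr_deriv ?_
    simp only [F']
    field_simp
  have hcont : ContinuousOn F (Ici 0) := fun y hy => (hF y hy).continuousAt.continuousWithinAt
  have hderiv : EqOn (deriv F) F' (interior (Ici 0)) := fun y hy =>
    (hF y (interior_subset hy)).deriv
  refine ⟨strictMonoOn_of_deriv_pos (convex_Ici 0) hcont fun y hy => ?_, ?_⟩
  · rw [hderiv hy]
    rw [interior_Ici, mem_Ioi] at hy
    positivity
  · have hanti := (strictAntiOn_div_two_add_mul_mul_sqrt two_pos pi_pos).mono interior_subset
    exact ((hanti.congr hderiv.symm).strictConcaveOn_of_deriv (convex_Ici 0) hcont).concaveOn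
end

section
/- Let l, τ ∈ [0,1], α ∈ (0,1], σ ≥ 0, and set F(y) = (2/π)·arcsin(πy/(2+πy)), Ψ(x) = (1 − lτ)² x + τ² F(α σ² x) and μ = (1 − lτ)² + τ² α σ². If μ < 1, then for every initial value x₀ ≥ 0 the iterates xₜ₊₁ = Ψ(xₜ) satisfy xₜ ≤ μᵗ x₀ for all t; in particular xₜ → 0 as t → ∞. -/
/-!
On `[0, ∞)` the nonlinearity satisfies `0 ≤ F y ≤ y`: with `u = π y / 2` the bound `F y ≤ y` reads
`arcsin (u / (1 + u)) ≤ u`, which follows from `u / (1 + u) ≤ u - u³/6 ≤ sin u` for `u ≤ π/2 < 2`.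
Hence `0 ≤ Ψ x ≤ μ x` for `x ≥ 0`, and the iterates decay at least geometrically with ratio `μ`.
-/

open Real Filter Topology

lemma div_one_add_le_sin {u : ℝ} (hu₀ : 0 ≤ u) (hu : u ≤ π / 2) : u / (1 + u) ≤ sin u := by
  have hu₂ : u ≤ 2 := hu.trans (by linarith [pi_lt_four])
  calc u / (1 + u) ≤ u - u ^ 3 / 6 := by
        rw [div_le_iff₀ (by linarith)]
        nlinarith [mul_nonneg (sq_nonneg u) (show 0 ≤ 6 - u - u ^ 2 by nlinarith)]
    _ ≤ sin u := sin_ge_sub_cube hu₀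

lemma arcsin_div_one_add_le {u : ℝ} (hu : 0 ≤ u) : arcsin (u / (1 + u)) ≤ u := by
  rcases le_or_gt (π / 2) u with hbig | hsmall
  · exact (arcsin_le_pi_div_two _).trans hbig
  · exact (arcsin_le_iff_le_sin' ⟨by linarith [pi_pos], hsmall⟩).2
      (div_one_add_le_sin hu hsmall.le)

/-- The arcsine nonlinearity `F` of the mean-field variance map. -/
noncomputable def arcsinGain (y : ℝ) : ℝ := 2 / π * arcsin (π * y / (2 + π * y))

lemma arcsinGain_nonneg {y : ℝ} (hy : 0 ≤ y) : 0 ≤ arcsinGain y := by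
  have := pi_pos
  have : 0 ≤ arcsin (π * y / (2 + π * y)) := arcsin_nonneg.2 (by positivity)
  unfold arcsinGain
  positivity

lemma arcsinGain_le_self {y : ℝ} (hy : 0 ≤ y) : arcsinGain y ≤ y := by
  have hπ := pi_pos
  have hrewrite : π * y / (2 + π * y) = π * y / 2 / (1 + π * y / 2) := by
    field_simp
  calc arcsinGain y = 2 / π * arcsin (π * y / 2 / (1 + π * y / 2)) := by
        rw [arcsinGain, hrewrite]
    _ ≤ 2 / π * (π * y / 2) := by
        gcongr
        exact arcsin_div_one_add_le (by positivity)
    _ = y := by field_simp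

lemma le_pow_mul_of_le_mul {x : ℕ → ℝ} {μ : ℝ} (hμ : 0 ≤ μ) (hx₀ : 0 ≤ x 0)
    (hstep : ∀ t, 0 ≤ x t → 0 ≤ x (t + 1) ∧ x (t + 1) ≤ μ * x t) (t : ℕ) :
    0 ≤ x t ∧ x t ≤ μ ^ t * x 0 := by
  induction t with
  | zero => simpa using hx₀
  | succ n ih =>
    obtain ⟨hpos, hle⟩ := hstep n ih.1
    refine ⟨hpos, ?_⟩
    calc x (n + 1) ≤ μ * x n := hle
      _ ≤ μ * (μ ^ n * x 0) := mul_le_mul_of_nonneg_left ih.2 hμ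
      _ = μ ^ (n + 1) * x 0 := by ring

theorem meanfield_variance_ordered_phase_general
    (l τ α σ : ℝ)
    (hα : α ∈ Set.Ioc (0 : ℝ) 1)
    (F Ψ : ℝ → ℝ)
    (hF : ∀ y, F y = 2 / π * Real.arcsin (π * y / (2 + π * y)))
    (hΨ : ∀ x, Ψ x = (1 - l * τ) ^ 2 * x + τ ^ 2 * F (α * σ ^ 2 * x))
    (μ : ℝ) (hμ : μ = (1 - l * τ) ^ 2 + τ ^ 2 * α * σ ^ 2) (hμ1 : μ < 1)
    (x : ℕ → ℝ) (hx0 : 0 ≤ x 0) (hx : ∀ t, x (t + 1) = Ψ (x t)) :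
    (∀ t, x t ≤ μ ^ t * x 0) ∧ Filter.Tendsto x Filter.atTop (nhds 0) := by
  have hα₀ := hα.1.le
  have hμ₀ : 0 ≤ μ := by rw [hμ]; positivity
  have hΨ_bounds : ∀ c, 0 ≤ c → 0 ≤ Ψ c ∧ Ψ c ≤ μ * c := by
    intro c hc
    have hy : 0 ≤ α * σ ^ 2 * c := by positivity
    have hF₀ := arcsinGain_nonneg hy
    have hF_le := arcsinGain_le_self hy
    rw [arcsinGain, ← hF] at hF₀ hF_le
    rw [hΨ, hμ]
    exact ⟨by positivity, by nlinarith [sq_nonneg τ]⟩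
  have hbound := le_pow_mul_of_le_mul hμ₀ hx0 fun t ht => hx t ▸ hΨ_bounds (x t) ht
  refine ⟨fun t => (hbound t).2, ?_⟩
  have hgeom : Tendsto (fun t => μ ^ t * x 0) atTop (𝓝 0) := by
    simpa using (tendsto_pow_atTop_nhds_zero_of_lt_one hμ₀ hμ1).mul_const (x 0)
  exact squeeze_zero (fun t => (hbound t).1) (fun t => (hbound t).2) hgeom

/-- in the ordered phase `μ = (1−lτ)² + τ²ασ² < 1`, the iterates of the
mean-field variance map `Ψ(x) = (1−lτ)² x + τ² F(ασ²x)` starting from any `x₀ ≥ 0`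
satisfy `xₜ ≤ μᵗ x₀`, hence converge to `0`. -/
theorem meanfield_variance_ordered_phase
    (l τ α σ : ℝ) (hl : l ∈ Set.Icc (0 : ℝ) 1) (hτ : τ ∈ Set.Icc (0 : ℝ) 1)
    (hα : α ∈ Set.Ioc (0 : ℝ) 1) (hσ : 0 ≤ σ)
    (F Ψ : ℝ → ℝ)
    (hF : ∀ y, F y = 2 / π * Real.arcsin (π * y / (2 + π * y)))
    (hΨ : ∀ x, Ψ x = (1 - l * τ) ^ 2 * x + τ ^ 2 * F (α * σ ^ 2 * x))
    (μ : ℝ) (hμ : μ = (1 - l * τ) ^ 2 + τ ^ 2 * α * σ ^ 2) (hμ1 : μ < 1)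
    (x : ℕ → ℝ) (hx0 : 0 ≤ x 0) (hx : ∀ t, x (t + 1) = Ψ (x t)) :
    (∀ t, x t ≤ μ ^ t * x 0) ∧ Filter.Tendsto x Filter.atTop (nhds 0) :=
  meanfield_variance_ordered_phase_general l τ α σ hα F Ψ hF hΨ μ hμ hμ1 x hx0 hx
end

section
/- Let τ ∈ (0,1] and l ∈ (0,1] with lτ ∈ (0,2), let α ∈ (0,1] and σ > 0, and set F(y) = (2/π)·arcsin(πy/(2+πy)), Ψ(x) = (1 − lτ)² x + τ² F(α σ² x) and μ = (1 − lτ)² + τ² α σ². If μ > 1, then Ψ has a unique fixed point x* > 0, and for every initial value x₀ > 0 the iterates xₜ₊₁ = Ψ(xₜ) converge to x* as t → ∞. -/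
/-!
Write `Ψ x = a x + b F (c x)` with `a = (1 - lτ)² < 1` and `b c = μ - a > 0`. Since `F` is strictly
concave with `F 0 = 0`, the ratio `Ψ x / x` is strictly decreasing on `(0, ∞)`; it tends to
`Ψ'(0) = μ > 1` at `0`, and it drops below `1` for large `x` because `F ≤ 1`. Hence `Ψ x = x` has
exactly one positive solution `x*`, and `x < Ψ x` below it, `Ψ x < x` above it. As `Ψ` is monotone,
an orbit started below (above) `x*` stays there, so it increases (decreases) to a positive limit,
which is a fixed point, hence `x*`.
-/

open Real Set Filter Topology Function

section FixedPoint

variable {f : ℝ → ℝ} {p : ℝ}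

theorem StrictConcaveOn.strictAntiOn_div (hf : StrictConcaveOn ℝ (Ici 0) f) (hf0 : f 0 = 0) :
    StrictAntiOn (fun x => f x / x) (Ioi 0) := by
  intro x (hx : 0 < x) y (hy : 0 < y) hxy
  simpa [hf0] using hf.secant_strict_mono self_mem_Ici hx.le hy.le hx.ne' hy.ne' hxy

theorem exists_lt_self_of_hasDerivAt_zero {μ : ℝ} (hf : HasDerivAt f μ 0) (hf0 : f 0 = 0)
    (hμ : 1 < μ) : ∃ x, 0 < x ∧ x < f x := by
  have hslope : ∀ᶠ t in 𝓝[>] (0 : ℝ), 1 < t⁻¹ • (f (0 + t) - f 0) :=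
    hf.tendsto_slope_zero_right.eventually (lt_mem_nhds hμ)
  obtain ⟨x, hslope_x, hx⟩ := (hslope.and self_mem_nhdsWithin).exists
  refine ⟨x, hx, ?_⟩
  rwa [zero_add, hf0, sub_zero, smul_eq_mul, ← div_eq_inv_mul, one_lt_div (mem_Ioi.1 hx)]
    at hslope_x

theorem eq_of_isFixedPt_of_strictAntiOn_div (hf : StrictAntiOn (fun x => f x / x) (Ioi 0))
    {x y : ℝ} (hx : 0 < x) (hy : 0 < y) (hfx : IsFixedPt f x) (hfy : IsFixedPt f y) : x = y :=
  hf.injOn hx hy (by simp only [hfx.eq, hfy.eq, div_self hx.ne', div_self hy.ne'])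

theorem exists_isFixedPt_of_lt_self_of_self_lt (hf : ContinuousOn f (Ioi 0)) {x₁ x₂ : ℝ}
    (hx₁ : 0 < x₁) (h₁ : x₁ < f x₁) (hx₂ : 0 < x₂) (h₂ : f x₂ < x₂) :
    ∃ x, 0 < x ∧ IsFixedPt f x := by
  have hsub : uIcc x₁ x₂ ⊆ Ioi 0 := fun x hx => lt_of_lt_of_le (lt_min hx₁ hx₂) hx.1
  have h0 : (0 : ℝ) ∈ uIcc (f x₁ - x₁) (f x₂ - x₂) :=
    mem_uIcc.2 (Or.inr ⟨by linarith, by linarith⟩)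
  obtain ⟨x, hx, hfx⟩ := intermediate_value_uIcc ((hf.mono hsub).sub continuousOn_id) h0
  exact ⟨x, hsub hx, sub_eq_zero.1 hfx⟩

theorem isFixedPt_of_tendsto_of_succ {x : ℕ → ℝ} {L : ℝ} (hf : ContinuousAt f L)
    (hx : ∀ t, x (t + 1) = f (x t)) (hL : Tendsto x atTop (𝓝 L)) : IsFixedPt f L := by
  refine tendsto_nhds_unique ?_ (hL.comp (tendsto_add_atTop_nat 1))
  simpa only [Function.comp_def, hx] using hf.tendsto.comp hL

theorem self_le_of_le_isFixedPt (hratio : StrictAntiOn (fun x => f x / x) (Ioi 0))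
    (hp : 0 < p) (hfp : IsFixedPt f p) {y : ℝ} (hy : 0 < y) (hyp : y ≤ p) : y ≤ f y := by
  have h := hratio.antitoneOn hy hp hyp
  rwa [hfp.eq, div_self hp.ne', one_le_div hy] at h

theorem le_self_of_isFixedPt_le (hratio : StrictAntiOn (fun x => f x / x) (Ioi 0))
    (hp : 0 < p) (hfp : IsFixedPt f p) {y : ℝ} (hy : p ≤ y) : f y ≤ y := by
  have h := hratio.antitoneOn hp (hp.trans_le hy) hy
  rwa [hfp.eq, div_self hp.ne', div_le_one (hp.trans_le hy)] at h

theorem monotone_and_le_of_le_isFixedPt (hmono : MonotoneOn f (Ioi 0))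
    (hratio : StrictAntiOn (fun x => f x / x) (Ioi 0)) (hp : 0 < p) (hfp : IsFixedPt f p)
    {x : ℕ → ℝ} (hx : ∀ t, x (t + 1) = f (x t)) (h0 : 0 < x 0) (hle : x 0 ≤ p) :
    Monotone x ∧ ∀ t, x t ≤ p := by
  have hbound : ∀ t, 0 < x t ∧ x t ≤ p := by
    intro t
    induction t with
    | zero => exact ⟨h0, hle⟩
    | succ t ih =>
      rw [hx t]
      exact ⟨ih.1.trans_le (self_le_of_le_isFixedPt hratio hp hfp ih.1 ih.2),
        hfp.eq ▸ hmono ih.1 hp ih.2⟩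
  refine ⟨monotone_nat_of_le_succ fun t => ?_, fun t => (hbound t).2⟩
  exact (hx t).symm ▸ self_le_of_le_isFixedPt hratio hp hfp (hbound t).1 (hbound t).2

theorem antitone_and_ge_of_isFixedPt_le (hmono : MonotoneOn f (Ioi 0))
    (hratio : StrictAntiOn (fun x => f x / x) (Ioi 0)) (hp : 0 < p) (hfp : IsFixedPt f p)
    {x : ℕ → ℝ} (hx : ∀ t, x (t + 1) = f (x t))
    (hge : p ≤ x 0) : Antitone x ∧ ∀ t, p ≤ x t := by
  have hbound : ∀ t, p ≤ x t := by
    intro t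
    induction t with
    | zero => exact hge
    | succ t ih => exact (hx t).symm ▸ hfp.eq ▸ hmono hp (hp.trans_le ih) ih
  refine ⟨antitone_nat_of_succ_le fun t => ?_, hbound⟩
  exact (hx t).symm ▸ le_self_of_isFixedPt_le hratio hp hfp (hbound t)

theorem tendsto_isFixedPt_of_strictAntiOn_div (hmono : MonotoneOn f (Ioi 0))
    (hcont : ContinuousOn f (Ioi 0)) (hratio : StrictAntiOn (fun x => f x / x) (Ioi 0))
    (hp : 0 < p) (hfp : IsFixedPt f p) {x : ℕ → ℝ} (hx : ∀ t, x (t + 1) = f (x t))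
    (h0 : 0 < x 0) : Tendsto x atTop (𝓝 p) := by
  obtain ⟨L, hL, hlim⟩ : ∃ L, 0 < L ∧ Tendsto x atTop (𝓝 L) := by
    rcases le_total (x 0) p with hle | hge
    · obtain ⟨hx_mono, hbound⟩ := monotone_and_le_of_le_isFixedPt hmono hratio hp hfp hx h0 hle
      have hlim := tendsto_atTop_ciSup hx_mono ⟨p, forall_mem_range.2 hbound⟩
      exact ⟨_, h0.trans_le (hx_mono.ge_of_tendsto hlim 0), hlim⟩
    · obtain ⟨hx_anti, hbound⟩ := antitone_and_ge_of_isFixedPt_le hmono hratio hp hfp hx hge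
      have hlim := tendsto_atTop_ciInf hx_anti ⟨p, forall_mem_range.2 hbound⟩
      exact ⟨_, hp.trans_le (le_ciInf hbound), hlim⟩
  have hfL := isFixedPt_of_tendsto_of_succ (hcont.continuousAt (Ioi_mem_nhds hL)) hx hlim
  rwa [eq_of_isFixedPt_of_strictAntiOn_div hratio hL hp hfL hfp] at hlim

theorem exists_isFixedPt_tendsto_of_strictAntiOn_div (hmono : MonotoneOn f (Ioi 0))
    (hcont : ContinuousOn f (Ioi 0)) (hratio : StrictAntiOn (fun x => f x / x) (Ioi 0))
    {x₁ x₂ : ℝ} (hx₁ : 0 < x₁) (h₁ : x₁ < f x₁) (hx₂ : 0 < x₂) (h₂ : f x₂ < x₂) :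
    ∃ p, 0 < p ∧ IsFixedPt f p ∧ (∀ y, 0 < y → IsFixedPt f y → y = p) ∧
      ∀ x : ℕ → ℝ, 0 < x 0 → (∀ t, x (t + 1) = f (x t)) → Tendsto x atTop (𝓝 p) := by
  obtain ⟨p, hp, hfp⟩ := exists_isFixedPt_of_lt_self_of_self_lt hcont hx₁ h₁ hx₂ h₂
  exact ⟨p, hp, hfp, fun y hy hfy => eq_of_isFixedPt_of_strictAntiOn_div hratio hy hp hfy hfp,
    fun x h0 hx => tendsto_isFixedPt_of_strictAntiOn_div hmono hcont hratio hp hfp hx h0⟩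

end FixedPoint

noncomputable def arcsinKernel (y : ℝ) : ℝ := 2 / π * arcsin (π * y / (2 + π * y))

theorem arcsinKernel_zero : arcsinKernel 0 = 0 := by simp [arcsinKernel]

theorem arcsinKernel_le_one (y : ℝ) : arcsinKernel y ≤ 1 := by
  calc arcsinKernel y ≤ 2 / π * (π / 2) :=
        mul_le_mul_of_nonneg_left (arcsin_le_pi_div_two _) (by positivity)
    _ = 1 := by field_simp

theorem hasDerivAt_arcsinKernel {y : ℝ} (hy : 0 < 1 + π * y) :
    HasDerivAt arcsinKernel (2 / ((2 + π * y) * √(1 + π * y))) y := by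
  have hd : 0 < 2 + π * y := by linarith
  have hg : HasDerivAt (fun y => π * y / (2 + π * y)) (2 * π / (2 + π * y) ^ 2) y := by
    refine (((hasDerivAt_id' y).const_mul π).div
      (((hasDerivAt_id' y).const_mul π).const_add 2) hd.ne').congr_deriv ?_
    field_simp
    ring
  have hsqrt : √(1 - (π * y / (2 + π * y)) ^ 2) = 2 * √(1 + π * y) / (2 + π * y) := by
    rw [← sqrt_sq (by positivity : 0 ≤ 2 * √(1 + π * y) / (2 + π * y))]
    congr 1
    rw [div_pow (2 * _), mul_pow, sq_sqrt hy.le]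
    field_simp
    ring
  have harc := hasDerivAt_arcsin (x := π * y / (2 + π * y))
    (by rw [Ne, div_eq_iff hd.ne']; linarith) (by rw [Ne, div_eq_iff hd.ne']; linarith)
  refine ((harc.comp y hg).const_mul (2 / π)).congr_deriv ?_
  rw [hsqrt]
  field_simp

theorem hasDerivAt_arcsinKernel_of_nonneg {y : ℝ} (hy : 0 ≤ y) :
    HasDerivAt arcsinKernel (2 / ((2 + π * y) * √(1 + π * y))) y :=
  hasDerivAt_arcsinKernel (add_pos_of_pos_of_nonneg one_pos (mul_nonneg pi_pos.le hy))

theorem continuousOn_arcsinKernel : ContinuousOn arcsinKernel (Ici 0) := fun _ hy =>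
  (hasDerivAt_arcsinKernel_of_nonneg hy).continuousAt.continuousWithinAt

theorem strictMonoOn_arcsinKernel : StrictMonoOn arcsinKernel (Ici 0) := by
  refine strictMonoOn_of_deriv_pos (convex_Ici 0) continuousOn_arcsinKernel fun y hy => ?_
  rw [interior_Ici] at hy
  rw [(hasDerivAt_arcsinKernel_of_nonneg (le_of_lt hy)).deriv]
  have : 0 < y := hy
  positivity

theorem strictConcaveOn_arcsinKernel : StrictConcaveOn ℝ (Ici 0) arcsinKernel := by
  refine StrictAntiOn.strictConcaveOn_of_deriv (convex_Ici 0) continuousOn_arcsinKernel ?_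
  rw [interior_Ici]
  intro u (hu : 0 < u) v (hv : 0 < v) huv
  rw [(hasDerivAt_arcsinKernel_of_nonneg hu.le).deriv,
    (hasDerivAt_arcsinKernel_of_nonneg hv.le).deriv]
  have hπuv : π * u < π * v := mul_lt_mul_of_pos_left huv pi_pos
  gcongr

noncomputable def varianceMap (a b c x : ℝ) : ℝ := a * x + b * arcsinKernel (c * x)

section VarianceMap

variable {a b c : ℝ}

theorem varianceMap_zero : varianceMap a b c 0 = 0 := by
  simp [varianceMap, arcsinKernel_zero]

theorem hasDerivAt_varianceMap_zero : HasDerivAt (varianceMap a b c) (a + b * c) 0 := by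
  have hF : HasDerivAt arcsinKernel 1 (c * 0) := by
    simpa using hasDerivAt_arcsinKernel (y := 0) (by simp)
  refine (((hasDerivAt_id 0).const_mul a).add
    ((hF.comp 0 ((hasDerivAt_id 0).const_mul c)).const_mul b)).congr_deriv ?_
  ring

theorem monotoneOn_varianceMap (ha : 0 ≤ a) (hb : 0 ≤ b) (hc : 0 ≤ c) :
    MonotoneOn (varianceMap a b c) (Ici 0) := by
  intro x (hx : 0 ≤ x) y (hy : 0 ≤ y) hxy
  have hF := strictMonoOn_arcsinKernel.monotoneOn (mul_nonneg hc hx) (mul_nonneg hc hy)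
    (mul_le_mul_of_nonneg_left hxy hc)
  exact add_le_add (mul_le_mul_of_nonneg_left hxy ha) (mul_le_mul_of_nonneg_left hF hb)

theorem continuousOn_varianceMap (hc : 0 ≤ c) : ContinuousOn (varianceMap a b c) (Ici 0) :=
  (continuousOn_const.mul continuousOn_id).add (continuousOn_const.mul
    (continuousOn_arcsinKernel.comp (continuousOn_const.mul continuousOn_id)
      fun _ hx => mul_nonneg hc hx))

theorem strictAntiOn_varianceMap_div (hb : 0 < b) (hc : 0 < c) :
    StrictAntiOn (fun x => varianceMap a b c x / x) (Ioi 0) := by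
  intro x (hx : 0 < x) y (hy : 0 < y) hxy
  have hF := strictConcaveOn_arcsinKernel.strictAntiOn_div arcsinKernel_zero (mul_pos hc hx)
    (mul_pos hc hy) (mul_lt_mul_of_pos_left hxy hc)
  have hdiv : ∀ z, 0 < z →
      varianceMap a b c z / z = a + b * c * (arcsinKernel (c * z) / (c * z)) := by
    intro z hz
    simp only [varianceMap]
    field_simp
  simp only [hdiv x hx, hdiv y hy] at hF ⊢
  gcongr

theorem exists_varianceMap_lt_self (ha : a < 1) (hb : 0 ≤ b) :
    ∃ x, 0 < x ∧ varianceMap a b c x < x := by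
  refine ⟨(b + 1) / (1 - a), by apply div_pos <;> linarith, ?_⟩
  have hF := mul_le_of_le_one_right hb (arcsinKernel_le_one (c * ((b + 1) / (1 - a))))
  have hx : (b + 1) / (1 - a) = a * ((b + 1) / (1 - a)) + (b + 1) := by
    field_simp [show 1 - a ≠ 0 by linarith]
    ring
  rw [varianceMap]
  linarith

end VarianceMap

theorem meanfield_variance_disordered_phase_general
    (l τ α σ : ℝ)
    (hlτ : l * τ ∈ Set.Ioo (0 : ℝ) 2)
    (F Ψ : ℝ → ℝ)
    (hF : ∀ y, F y = 2 / π * Real.arcsin (π * y / (2 + π * y)))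
    (hΨ : ∀ x, Ψ x = (1 - l * τ) ^ 2 * x + τ ^ 2 * F (α * σ ^ 2 * x))
    (μ : ℝ) (hμ : μ = (1 - l * τ) ^ 2 + τ ^ 2 * α * σ ^ 2) (hμ1 : 1 < μ) :
    ∃ xstar : ℝ, 0 < xstar ∧ Ψ xstar = xstar ∧
      (∀ y : ℝ, 0 < y → Ψ y = y → y = xstar) ∧
      ∀ x : ℕ → ℝ, 0 < x 0 → (∀ t, x (t + 1) = Ψ (x t)) →
        Filter.Tendsto x Filter.atTop (nhds xstar) := by
  have hΨ' : Ψ = varianceMap ((1 - l * τ) ^ 2) (τ ^ 2) (α * σ ^ 2) :=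
    funext fun x => by rw [hΨ, hF]; rfl
  have hμ' : μ = (1 - l * τ) ^ 2 + τ ^ 2 * (α * σ ^ 2) := by rw [hμ]; ring
  subst hΨ' hμ'
  have ha : (1 - l * τ) ^ 2 < 1 := by nlinarith [hlτ.1, hlτ.2]
  have hbc : 0 < τ ^ 2 * (α * σ ^ 2) := by linarith
  have hc : 0 < α * σ ^ 2 := pos_of_mul_pos_right hbc (sq_nonneg τ)
  have hb : 0 < τ ^ 2 := pos_of_mul_pos_left hbc hc.le
  obtain ⟨x₁, hx₁, h₁⟩ := exists_lt_self_of_hasDerivAt_zero hasDerivAt_varianceMap_zero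
    varianceMap_zero hμ1
  obtain ⟨x₂, hx₂, h₂⟩ := exists_varianceMap_lt_self ha hb.le
  exact exists_isFixedPt_tendsto_of_strictAntiOn_div
    ((monotoneOn_varianceMap (sq_nonneg _) hb.le hc.le).mono Ioi_subset_Ici_self)
    ((continuousOn_varianceMap hc.le).mono Ioi_subset_Ici_self)
    (strictAntiOn_varianceMap_div hb hc) hx₁ h₁ hx₂ h₂

/-- in the disordered phase `μ = (1−lτ)² + τ²ασ² > 1`, the mean-field
variance map `Ψ(x) = (1−lτ)² x + τ² F(ασ²x)` has a unique fixed point `x* > 0`, and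
iterates from any initial value `x₀ > 0` converge to it. -/
theorem meanfield_variance_disordered_phase
    (l τ α σ : ℝ) (hl : l ∈ Set.Ioc (0 : ℝ) 1) (hτ : τ ∈ Set.Ioc (0 : ℝ) 1)
    (hlτ : l * τ ∈ Set.Ioo (0 : ℝ) 2)
    (hα : α ∈ Set.Ioc (0 : ℝ) 1) (hσ : 0 < σ)
    (F Ψ : ℝ → ℝ)
    (hF : ∀ y, F y = 2 / π * Real.arcsin (π * y / (2 + π * y)))
    (hΨ : ∀ x, Ψ x = (1 - l * τ) ^ 2 * x + τ ^ 2 * F (α * σ ^ 2 * x))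
    (μ : ℝ) (hμ : μ = (1 - l * τ) ^ 2 + τ ^ 2 * α * σ ^ 2) (hμ1 : 1 < μ) :
    ∃ xstar : ℝ, 0 < xstar ∧ Ψ xstar = xstar ∧
      (∀ y : ℝ, 0 < y → Ψ y = y → y = xstar) ∧
      ∀ x : ℕ → ℝ, 0 < x 0 → (∀ t, x (t + 1) = Ψ (x t)) →
        Filter.Tendsto x Filter.atTop (nhds xstar) :=
  meanfield_variance_disordered_phase_general l τ α σ hlτ F Ψ hF hΨ μ hμ hμ1
end
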